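/- arXiv:1905.01835 — 4 statements merged into one kernel-verified Lean document; each statement's English description precedes it below -/
import Mathlib

section
/- Shift property of the WOLCT: for any window function φ ∈ L²(ℝ) \ {0}, any f ∈ L²(ℝ), and any t₀ ∈ ℝ, writing T_{t₀}f(t) = f(t − t₀), one has V_φ^A{T_{t₀}f}(u, w) = exp(i a t₀ w₀ − i(ac/2)t₀² + i c t₀(u − u₀)) · V_φ^A f(u − a t₀, w − t₀) for all u, w ∈ ℝ. -/
open MeasureTheory Complex ComplexConjugate

/-- The OLCT kernel K_A(t,u) for A = (a,b,c,d,u₀,w₀). -/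
noncomputable def olctKernel (a b c d u₀ w₀ : ℝ) (t u : ℝ) : ℂ :=
  (1 / (2 * Real.pi * Complex.I * b) ^ ((1:ℂ)/2)) *
    Complex.exp (Complex.I * (a / (2*b)) * t^2 - Complex.I / b * t * (u - u₀)
      - Complex.I / b * u * (d*u₀ - b*w₀) + Complex.I * (d / (2*b)) * (u^2 + u₀^2))

/-- The windowed offset linear canonical transform V_φ^A f(u,w). -/
noncomputable def wolct (a b c d u₀ w₀ : ℝ) (φ f : ℝ → ℂ) (u w : ℝ) : ℂ :=
  ∫ t : ℝ, f t * conj (φ (t - w)) * olctKernel a b c d u₀ w₀ t u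

theorem olctKernel_add_time (a b c d u₀ w₀ : ℝ) (hb : b ≠ 0) (hA : a * d - b * c = 1)
    (s t₀ u : ℝ) :
    olctKernel a b c d u₀ w₀ (s + t₀) u
      = Complex.exp (Complex.I * a * t₀ * w₀ - Complex.I * (a * c / 2) * t₀^2
          + Complex.I * c * t₀ * (u - u₀))
        * olctKernel a b c d u₀ w₀ s (u - a * t₀) := by
  have hbb : (b : ℂ) * (b : ℂ)⁻¹ = 1 := mul_inv_cancel₀ (by exact_mod_cast hb)
  have hA' : (a : ℂ) * d - b * c = 1 := by exact_mod_cast hA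
  have hexponent :
      Complex.I * ((a : ℂ) / (2 * b)) * ((s + t₀ : ℝ) : ℂ)^2
        - Complex.I / b * ((s + t₀ : ℝ) : ℂ) * ((u : ℂ) - u₀)
        - Complex.I / b * (u : ℂ) * ((d : ℂ) * u₀ - b * w₀)
        + Complex.I * ((d : ℂ) / (2 * b)) * ((u : ℂ)^2 + (u₀ : ℂ)^2)
      = (Complex.I * a * t₀ * w₀ - Complex.I * (a * c / 2) * t₀^2
          + Complex.I * c * t₀ * (u - u₀))
        + (Complex.I * ((a : ℂ) / (2 * b)) * (s : ℂ)^2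
          - Complex.I / b * (s : ℂ) * (((u - a * t₀ : ℝ) : ℂ) - u₀)
          - Complex.I / b * ((u - a * t₀ : ℝ) : ℂ) * ((d : ℂ) * u₀ - b * w₀)
          + Complex.I * ((d : ℂ) / (2 * b)) * (((u - a * t₀ : ℝ) : ℂ)^2 + (u₀ : ℂ)^2)) := by
    push_cast
    -- the `c`-terms of the phase arise from `d / b` via `a * d - b * c = 1`
    linear_combination
      (Complex.I * t₀ * (a * w₀ + c * u - c * u₀ - a * c * t₀ / 2)) * hbb
        + (Complex.I * t₀ * ((u : ℂ) - u₀ - a * t₀ / 2) * (b : ℂ)⁻¹) * hA'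
  rw [olctKernel, olctKernel, hexponent, Complex.exp_add]
  ring

theorem wolct_shift_general (a b c d u₀ w₀ : ℝ) (hb : b ≠ 0) (hA : a * d - b * c = 1)
    (φ f : ℝ → ℂ)
    (t₀ : ℝ) (u w : ℝ) :
    wolct a b c d u₀ w₀ φ (fun t => f (t - t₀)) u w
      = Complex.exp (Complex.I * a * t₀ * w₀ - Complex.I * (a * c / 2) * t₀^2
          + Complex.I * c * t₀ * (u - u₀))
        * wolct a b c d u₀ w₀ φ f (u - a * t₀) (w - t₀) := by
  rw [wolct, wolct, ← integral_const_mul, ← integral_add_right_eq_self _ t₀]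
  congr 1 with s
  rw [olctKernel_add_time a b c d u₀ w₀ hb hA, add_sub_cancel_right, sub_sub_eq_add_sub]
  ring

/-- Shift property of the WOLCT. -/
theorem wolct_shift (a b c d u₀ w₀ : ℝ) (hb : b ≠ 0) (hA : a * d - b * c = 1)
    (φ f : ℝ → ℂ) (hφ : MemLp φ 2 volume) (hφ0 : φ ≠ 0)
    (hf : MemLp f 2 volume)
    (hfi : ∀ u w : ℝ, Integrable (fun t : ℝ => f t * conj (φ (t - w)) * olctKernel a b c d u₀ w₀ t u))
    (t₀ : ℝ) (u w : ℝ) :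
    wolct a b c d u₀ w₀ φ (fun t => f (t - t₀)) u w
      = Complex.exp (Complex.I * a * t₀ * w₀ - Complex.I * (a * c / 2) * t₀^2
          + Complex.I * c * t₀ * (u - u₀))
        * wolct a b c d u₀ w₀ φ f (u - a * t₀) (w - t₀) :=
  wolct_shift_general a b c d u₀ w₀ hb hA φ f t₀ u w
end

section
/- Modulation property of the WOLCT: for any window function φ ∈ L²(ℝ) \ {0}, any f ∈ L²(ℝ), and any s ∈ ℝ, writing M_s f(t) = f(t)·exp(ist), one has V_φ^A{M_s f}(u, w) = exp(i b s w₀ − i(db/2)s² + i d s(u − u₀)) · V_φ^A f(u − bs, w) for all u, w ∈ ℝ. -/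
/-!
Completing the square in the kernel's phase shows that `exp (i s t) K_A(t, u)` is a constant
phase times `K_A(t, u - b s)`, so the identity already holds between the integrands; pulling a
constant out of a Bochner integral needs no integrability.
-/

open MeasureTheory Complex ComplexConjugate

theorem exp_mul_olctKernel (a b c d u₀ w₀ : ℝ) (hb : b ≠ 0) (s t u : ℝ) :
    Complex.exp (Complex.I * s * t) * olctKernel a b c d u₀ w₀ t u
      = Complex.exp (Complex.I * b * s * w₀ - Complex.I * (d * b / 2) * s^2
          + Complex.I * d * s * (u - u₀))
        * olctKernel a b c d u₀ w₀ t (u - b * s) := by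
  have hb' : (b : ℂ) ≠ 0 := by exact_mod_cast hb
  simp only [olctKernel]
  rw [mul_left_comm, ← Complex.exp_add, mul_left_comm (Complex.exp _), ← Complex.exp_add]
  congr 2
  push_cast
  field_simp
  ring

theorem wolct_modulation_general (a b c d u₀ w₀ : ℝ) (hb : b ≠ 0)
    (φ f : ℝ → ℂ)
    (s : ℝ) (u w : ℝ) :
    wolct a b c d u₀ w₀ φ (fun t => f t * Complex.exp (Complex.I * s * t)) u w
      = Complex.exp (Complex.I * b * s * w₀ - Complex.I * (d * b / 2) * s^2
          + Complex.I * d * s * (u - u₀))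
        * wolct a b c d u₀ w₀ φ f (u - b * s) w := by
  rw [wolct, wolct, ← integral_const_mul]
  congr 1 with t
  linear_combination (f t * conj (φ (t - w))) * exp_mul_olctKernel a b c d u₀ w₀ hb s t u

/-- Modulation property of the WOLCT. -/
theorem wolct_modulation (a b c d u₀ w₀ : ℝ) (hb : b ≠ 0) (hA : a * d - b * c = 1)
    (φ f : ℝ → ℂ) (hφ : MemLp φ 2 volume) (hφ0 : φ ≠ 0)
    (hf : MemLp f 2 volume)
    (hfi : ∀ u w : ℝ, Integrable (fun t : ℝ => f t * conj (φ (t - w)) * olctKernel a b c d u₀ w₀ t u))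
    (s : ℝ) (u w : ℝ) :
    wolct a b c d u₀ w₀ φ (fun t => f t * Complex.exp (Complex.I * s * t)) u w
      = Complex.exp (Complex.I * b * s * w₀ - Complex.I * (d * b / 2) * s^2
          + Complex.I * d * s * (u - u₀))
        * wolct a b c d u₀ w₀ φ f (u - b * s) w :=
  wolct_modulation_general a b c d u₀ w₀ hb φ f s u w
end

section
/- Plancherel-type identity for the WOLCT: let φ ∈ L²(ℝ) \ {0} be a window function and f ∈ L²(ℝ). Then ∫_ℝ ∫_ℝ |V_φ^A f(u, w)|² du dw = ‖f‖² · ‖φ‖², where ‖·‖ denotes the L²(ℝ) norm. -/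
open MeasureTheory Complex ComplexConjugate

/-!
Up to a unimodular chirp in `t` and a factor of modulus `(2π|b|)^{-1/2}`, the OLCT is the Fourier
transform evaluated at `u / (2πb)`, so Plancherel's theorem makes it an isometry of `L²`. For
fixed `w`, `V_φ^A f(·, w)` is the OLCT of `f · conj (φ (· - w))`, which lies in `L¹` and, for
almost every `w`, in `L²`; hence
`∫ |V_φ^A f(u, w)|² du = ∫ |f t|² |φ (t - w)|² dt`, and integrating in `w` (Fubini) gives
`‖f‖² ‖φ‖²`.
-/

open Real FourierTransform

section Plancherel

variable {V F : Type*} [NormedAddCommGroup V] [InnerProductSpace ℝ V] [FiniteDimensional ℝ V]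
  [MeasurableSpace V] [BorelSpace V]
  [NormedAddCommGroup F] [InnerProductSpace ℂ F] [CompleteSpace F]

theorem MeasureTheory.Lp.integral_norm_sq {α E : Type*} [MeasurableSpace α] {μ : Measure α}
    [NormedAddCommGroup E] (f : Lp E 2 μ) : ∫ a, ‖f a‖ ^ 2 ∂μ = ‖f‖ ^ 2 := by
  rw [Lp.norm_def, (Lp.memLp f).eLpNorm_eq_integral_rpow_norm two_ne_zero ENNReal.ofNat_ne_top,
    ENNReal.toReal_ofReal (by positivity), ← Real.rpow_natCast,
    ← Real.rpow_mul (integral_nonneg fun _ => by positivity)]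
  norm_num

/-- Both sides define the same tempered distribution, by self-adjointness of `𝓕` against test
functions. -/
theorem Real.fourier_ae_eq_fourier_toLp {g : V → F} (hg₁ : Integrable g) (hg₂ : MemLp g 2) :
    𝓕 g =ᵐ[volume] (𝓕 (hg₂.toLp g) : Lp F 2 volume) := by
  refine ae_eq_of_integral_contDiff_smul_eq ?_ ((Lp.memLp _).locallyIntegrable one_le_two) ?_
  · exact (VectorFourier.fourierIntegral_continuous Real.continuous_fourierChar
      (innerSL ℝ).continuous₂ hg₁).locallyIntegrable
  intro ψ hψ hψc
  set Ψ : SchwartzMap V ℂ :=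
    (hψc.comp_left Complex.ofReal_zero).toSchwartzMap (ofRealCLM.contDiff.comp hψ)
  have hΨ : ∀ (x) (y : F), ψ x • y = Ψ x • y := fun x y => (Complex.coe_smul _ _).symm
  simp_rw [hΨ]
  calc ∫ x, Ψ x • 𝓕 g x = ∫ x, 𝓕 Ψ x • g x := by
        simpa using! (VectorFourier.integral_fourierIntegral_smul_eq_flip (L := innerₗ V)
          Real.continuous_fourierChar continuous_inner Ψ.integrable hg₁).symm
    _ = Lp.toTemperedDistribution (hg₂.toLp g) (𝓕 Ψ) := by
        rw [Lp.toTemperedDistribution_apply]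
        exact integral_congr_ae (hg₂.coeFn_toLp.mono fun x hx => by simp only [hx])
    _ = Lp.toTemperedDistribution (𝓕 (hg₂.toLp g) : Lp F 2 volume) Ψ := by
        rw [← Lp.fourier_toTemperedDistribution_eq, TemperedDistribution.fourier_apply]
    _ = _ := Lp.toTemperedDistribution_apply _ _

theorem Real.integral_norm_sq_fourier {g : V → F} (hg₁ : Integrable g) (hg₂ : MemLp g 2) :
    ∫ ξ, ‖𝓕 g ξ‖ ^ 2 = ∫ x, ‖g x‖ ^ 2 := by
  calc ∫ ξ, ‖𝓕 g ξ‖ ^ 2 = ∫ ξ, ‖(𝓕 (hg₂.toLp g) : Lp F 2 volume) ξ‖ ^ 2 :=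
        integral_congr_ae ((fourier_ae_eq_fourier_toLp hg₁ hg₂).mono fun ξ hξ => by simp only [hξ])
    _ = ‖hg₂.toLp g‖ ^ 2 := by rw [Lp.integral_norm_sq, Lp.norm_fourier_eq]
    _ = ∫ x, ‖g x‖ ^ 2 := by
        rw [← Lp.integral_norm_sq]
        exact integral_congr_ae (hg₂.coeFn_toLp.mono fun x hx => by simp only [hx])

end Plancherel

section Correlation

variable {G : Type*} [AddGroup G] [MeasurableSpace G] [MeasurableAdd₂ G] [MeasurableNeg G]
  {μ : Measure G} [SFinite μ] [μ.IsAddRightInvariant] [μ.IsNegInvariant] {F H : G → ℝ}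

theorem MeasureTheory.Integrable.ae_integrable_mul_comp_sub (hF : Integrable F μ)
    (hH : Integrable H μ) : ∀ᵐ w ∂μ, Integrable (fun t => F t * H (t - w)) μ := by
  filter_upwards [hF.ae_convolution_exists (ContinuousLinearMap.mul ℝ ℝ) hH.comp_neg] with w hw
  simpa [ConvolutionExistsAt] using hw

theorem MeasureTheory.integral_integral_mul_comp_sub (hF : Integrable F μ) (hH : Integrable H μ) :
    ∫ w, ∫ t, F t * H (t - w) ∂μ ∂μ = (∫ t, F t ∂μ) * ∫ t, H t ∂μ := by
  simpa [convolution_def, integral_neg_eq_self] using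
    integral_convolution (ContinuousLinearMap.mul ℝ ℝ) hF hH.comp_neg

end Correlation

section OLCT

noncomputable def olct (a b c d u₀ w₀ : ℝ) (h : ℝ → ℂ) (u : ℝ) : ℂ :=
  ∫ t, h t * olctKernel a b c d u₀ w₀ t u

noncomputable def olctChirp (a b u₀ t : ℝ) : ℂ :=
  cexp (((a / (2 * b) * t ^ 2 + u₀ / b * t : ℝ) : ℂ) * I)

noncomputable def olctAmplitude (b d u₀ w₀ u : ℝ) : ℂ :=
  1 / (2 * π * I * b) ^ (1 / 2 : ℂ) *
    cexp (((d / (2 * b) * (u ^ 2 + u₀ ^ 2) - u * (d * u₀ - b * w₀) / b : ℝ) : ℂ) * I)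

variable {a b c d u₀ w₀ : ℝ}

theorem norm_olctChirp (t : ℝ) : ‖olctChirp a b u₀ t‖ = 1 := norm_exp_ofReal_mul_I _

theorem continuous_olctChirp : Continuous (olctChirp a b u₀) := by
  unfold olctChirp; fun_prop

theorem norm_olctAmplitude_sq (u : ℝ) : ‖olctAmplitude b d u₀ w₀ u‖ ^ 2 = (2 * π * |b|)⁻¹ := by
  have hhalf : (1 / 2 : ℂ) = ((1 / 2 : ℝ) : ℂ) := by norm_num
  rw [olctAmplitude, norm_mul, norm_exp_ofReal_mul_I, mul_one, norm_div, norm_one, hhalf,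
    norm_cpow_real, ← Real.sqrt_eq_rpow, div_pow, one_pow, Real.sq_sqrt (norm_nonneg _), one_div]
  simp [abs_of_pos Real.pi_pos]

theorem olctKernel_eq (t u : ℝ) :
    olctKernel a b c d u₀ w₀ t u = olctAmplitude b d u₀ w₀ u *
      (cexp (((-2 * π * t * (u / (2 * π * b)) : ℝ) : ℂ) * I) * olctChirp a b u₀ t) := by
  rw [olctKernel, olctAmplitude, olctChirp, mul_assoc (1 / _), ← Complex.exp_add,
    ← Complex.exp_add]
  congr 2
  push_cast
  field_simp
  ring

theorem olct_eq_fourier (h : ℝ → ℂ) (u : ℝ) :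
    olct a b c d u₀ w₀ h u =
      olctAmplitude b d u₀ w₀ u * 𝓕 (fun t => olctChirp a b u₀ t * h t) (u / (2 * π * b)) := by
  rw [olct, Real.fourier_real_eq_integral_exp_smul, ← integral_const_mul]
  congr 1 with t
  rw [olctKernel_eq, smul_eq_mul]
  ring

theorem integral_norm_sq_olct (hb : b ≠ 0) {h : ℝ → ℂ} (hh₁ : Integrable h) (hh₂ : MemLp h 2) :
    ∫ u, ‖olct a b c d u₀ w₀ h u‖ ^ 2 = ∫ t, ‖h t‖ ^ 2 := by
  set H := fun t => olctChirp a b u₀ t * h t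
  have hH : AEStronglyMeasurable H := continuous_olctChirp.aestronglyMeasurable.mul hh₁.1
  have hnorm : ∀ t, ‖h t‖ = ‖H t‖ := by simp [H, norm_olctChirp]
  have hπb : 0 < 2 * π * |b| := by positivity
  calc ∫ u, ‖olct a b c d u₀ w₀ h u‖ ^ 2
        = ∫ u, (2 * π * |b|)⁻¹ * ‖𝓕 H ((2 * π * b)⁻¹ * u)‖ ^ 2 := by
        congr 1 with u
        rw [olct_eq_fourier, norm_mul, mul_pow, norm_olctAmplitude_sq, div_eq_inv_mul]
    _ = ∫ ξ, ‖𝓕 H ξ‖ ^ 2 := by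
        rw [integral_const_mul, Measure.integral_comp_mul_left (fun ξ => ‖𝓕 H ξ‖ ^ 2), inv_inv, abs_mul,
          abs_of_pos (by positivity : (0 : ℝ) < 2 * π), smul_eq_mul, inv_mul_cancel_left₀ hπb.ne']
    _ = ∫ t, ‖H t‖ ^ 2 :=
        Real.integral_norm_sq_fourier (hh₁.congr' hH (ae_of_all _ hnorm))
          (hh₂.congr_norm hH (ae_of_all _ hnorm))
    _ = ∫ t, ‖h t‖ ^ 2 := by simp_rw [hnorm]

end OLCT

section Window

variable {φ f : ℝ → ℂ}

theorem wolct_eq_olct (a b c d u₀ w₀ u w : ℝ) :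
    wolct a b c d u₀ w₀ φ f u w = olct a b c d u₀ w₀ (fun t => f t * conj (φ (t - w))) u := rfl

theorem norm_mul_conj_comp_sub_sq (w t : ℝ) :
    ‖f t * conj (φ (t - w))‖ ^ 2 = ‖f t‖ ^ 2 * ‖φ (t - w)‖ ^ 2 := by
  rw [norm_mul, RCLike.norm_conj, mul_pow]

theorem MeasureTheory.MemLp.integrable_mul_conj_comp_sub (hf : MemLp f 2) (hφ : MemLp φ 2)
    (w : ℝ) : Integrable (fun t => f t * conj (φ (t - w))) :=
  hf.integrable_mul (hφ.comp_measurePreserving (measurePreserving_sub_right volume w)).star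

theorem MeasureTheory.MemLp.ae_memLp_mul_conj_comp_sub (hf : MemLp f 2) (hφ : MemLp φ 2) :
    ∀ᵐ w, MemLp (fun t => f t * conj (φ (t - w))) 2 := by
  filter_upwards [(hf.integrable_norm_pow two_ne_zero).ae_integrable_mul_comp_sub
    (hφ.integrable_norm_pow two_ne_zero)] with w hw
  have hmeas := (hf.integrable_mul_conj_comp_sub hφ w).1
  rw [memLp_two_iff_integrable_sq_norm hmeas]
  simpa only [norm_mul_conj_comp_sub_sq] using hw

end Window

theorem wolct_plancherel_general (a b c d u₀ w₀ : ℝ) (hb : b ≠ 0)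
    (φ f : ℝ → ℂ) (hφ : MemLp φ 2 volume)
    (hf : MemLp f 2 volume) :
    (∫ w : ℝ, ∫ u : ℝ, ‖wolct a b c d u₀ w₀ φ f u w‖^2)
      = (∫ t : ℝ, ‖f t‖^2) * (∫ t : ℝ, ‖φ t‖^2) := by
  calc (∫ w : ℝ, ∫ u : ℝ, ‖wolct a b c d u₀ w₀ φ f u w‖^2)
        = ∫ w, ∫ t, ‖f t‖ ^ 2 * ‖φ (t - w)‖ ^ 2 := by
        refine integral_congr_ae ?_
        filter_upwards [hf.ae_memLp_mul_conj_comp_sub hφ] with w hw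
        simp_rw [wolct_eq_olct, integral_norm_sq_olct hb (hf.integrable_mul_conj_comp_sub hφ w) hw,
          norm_mul_conj_comp_sub_sq]
    _ = (∫ t : ℝ, ‖f t‖^2) * (∫ t : ℝ, ‖φ t‖^2) :=
        integral_integral_mul_comp_sub (hf.integrable_norm_pow two_ne_zero)
          (hφ.integrable_norm_pow two_ne_zero)

/-- Plancherel-type identity for the WOLCT. -/
theorem wolct_plancherel (a b c d u₀ w₀ : ℝ) (hb : b ≠ 0) (hA : a * d - b * c = 1)
    (φ f : ℝ → ℂ) (hφ : MemLp φ 2 volume) (hφ0 : φ ≠ 0)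
    (hf : MemLp f 2 volume)
    (hfi : ∀ u w : ℝ, Integrable (fun t : ℝ => f t * conj (φ (t - w)) * olctKernel a b c d u₀ w₀ t u))
    (h1 : ∀ w : ℝ, Integrable (fun u : ℝ => ‖wolct a b c d u₀ w₀ φ f u w‖^2))
    (h2 : Integrable (fun w : ℝ => ∫ u : ℝ, ‖wolct a b c d u₀ w₀ φ f u w‖^2)) :
    (∫ w : ℝ, ∫ u : ℝ, ‖wolct a b c d u₀ w₀ φ f u w‖^2)
      = (∫ t : ℝ, ‖f t‖^2) * (∫ t : ℝ, ‖φ t‖^2) :=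
  wolct_plancherel_general a b c d u₀ w₀ hb φ f hφ hf
end

section
/- Parity property of the WOLCT: for any window function φ ∈ L²(ℝ) \ {0} and any f ∈ L²(ℝ), writing Pg(t) = g(−t), one has V_{Pφ}^A{Pf}(u, w) = V_φ^A f(2u₀ − u, −w) · exp(2i w₀(u − u₀)) for all u, w ∈ ℝ. -/
open MeasureTheory Complex ComplexConjugate

/-!
Substitute `t ↦ -t` in the defining integral. The chirp `exp (i a t² / 2b)` is even in `t`, and
the sign change of the cross term `-(i/b) t (u - u₀)` is the same as reflecting `u` about `u₀`,
i.e. `u ↦ 2u₀ - u`. Under that reflection the `d`-dependent phases in `u` are invariant, and only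
the offset phase `i w₀ u` changes, by `2 i w₀ (u - u₀)`.
-/

theorem olctKernel_neg (a b c d u₀ w₀ : ℝ) (hb : b ≠ 0) (t u : ℝ) :
    olctKernel a b c d u₀ w₀ (-t) u
      = olctKernel a b c d u₀ w₀ t (2 * u₀ - u) * exp (2 * I * w₀ * (u - u₀)) := by
  have hb' : (b : ℂ) * (b : ℂ)⁻¹ = 1 := mul_inv_cancel₀ (ofReal_ne_zero.mpr hb)
  rw [olctKernel, olctKernel, mul_assoc _ (exp _) (exp _), ← exp_add]
  congr 2
  push_cast
  simp only [div_eq_mul_inv, mul_inv]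
  linear_combination 2 * I * w₀ * (u - u₀) * hb'

theorem wolct_parity_general (a b c d u₀ w₀ : ℝ) (hb : b ≠ 0)
    (φ f : ℝ → ℂ)
    (u w : ℝ) :
    wolct a b c d u₀ w₀ (fun t => φ (-t)) (fun t => f (-t)) u w
      = wolct a b c d u₀ w₀ φ f (2*u₀ - u) (-w)
        * Complex.exp (2 * Complex.I * w₀ * (u - u₀)) := by
  rw [wolct, wolct, ← integral_mul_const, ← integral_neg_eq_self]
  congr 1 with t
  rw [olctKernel_neg a b c d u₀ w₀ hb, neg_neg, ← mul_assoc]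
  ring_nf

/-- Parity property of the WOLCT. -/
theorem wolct_parity (a b c d u₀ w₀ : ℝ) (hb : b ≠ 0) (hA : a * d - b * c = 1)
    (φ f : ℝ → ℂ) (hφ : MemLp φ 2 volume) (hφ0 : φ ≠ 0)
    (hf : MemLp f 2 volume)
    (hfi : ∀ u w : ℝ, Integrable (fun t : ℝ => f t * conj (φ (t - w)) * olctKernel a b c d u₀ w₀ t u))
    (u w : ℝ) :
    wolct a b c d u₀ w₀ (fun t => φ (-t)) (fun t => f (-t)) u w
      = wolct a b c d u₀ w₀ φ f (2*u₀ - u) (-w)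
        * Complex.exp (2 * Complex.I * w₀ * (u - u₀)) :=
  wolct_parity_general a b c d u₀ w₀ hb φ f u w
end
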